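/- For any density matrix ρ_A on H_A with C_r(ρ_A) measured in basis {|a_j⟩}, and any incoherent state σ_B = Σ_i c_i |b_i⟩⟨b_i| on H_B (diagonal in {|b_i⟩}), the relative entropy of coherence in the product basis satisfies C_r(ρ_A ⊗ σ_B) = C_r(ρ_A). -/

import Mathlib

open Matrix
open scoped ComplexOrder

variable {n : Type*} [Fintype n] [DecidableEq n]

/-- The trace norm (sum of singular values) of a complex square matrix. -/
noncomputable def traceNorm (A : Matrix n n ℂ) : ℝ :=
  (((posSemidef_conjTranspose_mul_self A).1.eigenvectorUnitary.1 *
      diagonal (((↑) : ℝ → ℂ) ∘ Real.sqrt ∘ (posSemidef_conjTranspose_mul_self A).1.eigenvalues) *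
      (star (posSemidef_conjTranspose_mul_self A).1.eigenvectorUnitary : Matrix n n ℂ)).trace).re

/-- `A` is a density matrix: positive semidefinite with unit trace. -/
def IsDensityMatrix (A : Matrix n n ℂ) : Prop := A.PosSemidef ∧ A.trace = 1

/-- `A` is incoherent (diagonal) in the fixed basis. -/
def Incoherent (A : Matrix n n ℂ) : Prop := ∀ i j, i ≠ j → A i j = 0

/-- The dephasing map, removing all off-diagonal entries. -/
def dephase (A : Matrix n n ℂ) : Matrix n n ℂ := Matrix.diagonal (fun i => A i i)

/-- The `l₁`-norm of coherence: sum of moduli of off-diagonal entries. -/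
noncomputable def Cl1 (A : Matrix n n ℂ) : ℝ :=
  ∑ i, ∑ j, if i ≠ j then ‖A i j‖ else 0

/-- The von Neumann entropy `-Tr ρ log ρ` of a Hermitian matrix, via its eigenvalues
(junk value `0` on non-Hermitian matrices). -/
noncomputable def vnEntropy (A : Matrix n n ℂ) : ℝ :=
  if h : A.IsHermitian then -∑ i, h.eigenvalues i * Real.log (h.eigenvalues i) else 0

/-- The relative entropy of coherence `C_r(ρ) = S(Δ(ρ)) - S(ρ)`. -/
noncomputable def Crel (A : Matrix n n ℂ) : ℝ := vnEntropy (dephase A) - vnEntropy A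

/-! The products of the eigenvectors of `A` and `B` diagonalize `A ⊗ B`, with eigenvalues
`λᵢ μₖ`. Since `η(x) = -x log x` satisfies `η(xy) = y η(x) + x η(y)`, this gives
`S(A ⊗ B) = tr B · S(A) + tr A · S(B)` for Hermitian `A`, `B`. Dephasing commutes with `⊗`, so
the same rule holds for `C_r`; an incoherent `σ` has `C_r(σ) = 0`, and `tr σ = 1`. -/

open Real
open scoped Kronecker

section

variable {ι κ R 𝕜 : Type*}

open Polynomial in
lemma Matrix.roots_charpoly_diagonal [Fintype ι] [DecidableEq ι] [CommRing R] [IsDomain R]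
    (d : ι → R) : (diagonal d).charpoly.roots = Finset.univ.val.map d := by
  rw [charpoly_diagonal, roots_prod _ _ (by simp [Finset.prod_ne_zero_iff, X_sub_C_ne_zero])]
  simp

lemma Matrix.charpoly_conj_of_mem_unitary [Fintype ι] [DecidableEq ι] [CommRing R] [StarRing R]
    {U : Matrix ι ι R} (hU : U ∈ unitary (Matrix ι ι R)) (A : Matrix ι ι R) :
    (U * A * star U).charpoly = A.charpoly := by
  rw [charpoly_mul_comm, ← mul_assoc, Unitary.star_mul_self_of_mem hU, one_mul]

lemma Matrix.IsHermitian.kronecker [CommRing R] [StarRing R] {A : Matrix ι ι R}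
    {B : Matrix κ κ R} (hA : A.IsHermitian) (hB : B.IsHermitian) : (A ⊗ₖ B).IsHermitian := by
  rw [IsHermitian, conjTranspose_kronecker, hA.eq, hB.eq]

lemma Matrix.isHermitian_diagonal_ofReal [DecidableEq ι] [RCLike 𝕜] (d : ι → ℝ) :
    (diagonal fun i => (d i : 𝕜)).IsHermitian :=
  isHermitian_diagonal_iff.2 fun i => RCLike.conj_ofReal (d i)

lemma Matrix.IsHermitian.kronecker_eq_conj_diagonal [Fintype ι] [DecidableEq ι] [Fintype κ]
    [DecidableEq κ] [RCLike 𝕜] {A : Matrix ι ι 𝕜} {B : Matrix κ κ 𝕜} (hA : A.IsHermitian)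
    (hB : B.IsHermitian) :
    A ⊗ₖ B = ((hA.eigenvectorUnitary : Matrix ι ι 𝕜) ⊗ₖ (hB.eigenvectorUnitary : Matrix κ κ 𝕜)) *
      diagonal (fun p => ((hA.eigenvalues p.1 * hB.eigenvalues p.2 : ℝ) : 𝕜)) *
      star ((hA.eigenvectorUnitary : Matrix ι ι 𝕜) ⊗ₖ (hB.eigenvectorUnitary : Matrix κ κ 𝕜)) := by
  conv_lhs => rw [hA.spectral_theorem, hB.spectral_theorem]
  simp only [Unitary.conjStarAlgAut_apply, star_eq_conjTranspose, conjTranspose_kronecker,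
    mul_kronecker_mul, diagonal_kronecker_diagonal]
  simp

lemma sum_negMulLog_mul [Fintype ι] [Fintype κ] (p : ι → ℝ) (q : κ → ℝ) :
    ∑ i, ∑ k, negMulLog (p i * q k) =
      (∑ k, q k) * ∑ i, negMulLog (p i) + (∑ i, p i) * ∑ k, negMulLog (q k) := by
  simp only [negMulLog_mul, Finset.sum_add_distrib, Finset.mul_sum, Finset.sum_mul]
  congr 1
  exact Finset.sum_comm

section Entropy

variable [Fintype ι] [DecidableEq ι] [Fintype κ] [DecidableEq κ]

lemma Matrix.IsHermitian.vnEntropy_eq {A : Matrix ι ι ℂ} (hA : A.IsHermitian) :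
    vnEntropy A = ∑ i, negMulLog (hA.eigenvalues i) := by
  simp [vnEntropy, hA, negMulLog]

lemma Matrix.IsHermitian.vnEntropy_eq_sum_roots {A : Matrix ι ι ℂ} (hA : A.IsHermitian) :
    vnEntropy A = (A.charpoly.roots.map fun z => negMulLog z.re).sum := by
  rw [hA.vnEntropy_eq, hA.roots_charpoly_eq_eigenvalues, Multiset.map_map]
  simp

lemma Matrix.IsHermitian.vnEntropy_eq_of_charpoly_eq {A B : Matrix ι ι ℂ} (hA : A.IsHermitian)
    (hB : B.IsHermitian) (h : A.charpoly = B.charpoly) : vnEntropy A = vnEntropy B := by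
  rw [hA.vnEntropy_eq_sum_roots, hB.vnEntropy_eq_sum_roots, h]

lemma vnEntropy_diagonal_ofReal (d : ι → ℝ) :
    vnEntropy (diagonal fun i => (d i : ℂ)) = ∑ i, negMulLog (d i) := by
  -- restated so that the coercion is `Complex.ofReal`, not the defeq `RCLike.ofReal` that
  -- `rw` would not match
  have hd : (diagonal fun i => (d i : ℂ)).IsHermitian := isHermitian_diagonal_ofReal d
  rw [hd.vnEntropy_eq_sum_roots, roots_charpoly_diagonal, Multiset.map_map]
  simp

lemma Matrix.IsHermitian.vnEntropy_kronecker {A : Matrix ι ι ℂ} {B : Matrix κ κ ℂ}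
    (hA : A.IsHermitian) (hB : B.IsHermitian) :
    vnEntropy (A ⊗ₖ B) = B.trace.re * vnEntropy A + A.trace.re * vnEntropy B := by
  have hU := kronecker_mem_unitary hA.eigenvectorUnitary.2 hB.eigenvectorUnitary.2
  have hD : (diagonal fun p : ι × κ =>
      ((hA.eigenvalues p.1 * hB.eigenvalues p.2 : ℝ) : ℂ)).IsHermitian :=
    isHermitian_diagonal_ofReal _
  rw [(hA.kronecker hB).vnEntropy_eq_of_charpoly_eq hD
      (by rw [hA.kronecker_eq_conj_diagonal hB, charpoly_conj_of_mem_unitary hU]; rfl),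
    vnEntropy_diagonal_ofReal, Fintype.sum_prod_type, sum_negMulLog_mul, hA.vnEntropy_eq,
    hB.vnEntropy_eq, hA.trace_eq_sum_eigenvalues, hB.trace_eq_sum_eigenvalues]
  simp

end Entropy

section Coherence

variable [DecidableEq ι] [DecidableEq κ]

lemma Matrix.IsHermitian.dephase {A : Matrix ι ι ℂ} (hA : A.IsHermitian) :
    (dephase A).IsHermitian :=
  isHermitian_diagonal_iff.2 fun i => hA.apply i i

lemma trace_dephase [Fintype ι] (A : Matrix ι ι ℂ) : (dephase A).trace = A.trace :=
  trace_diagonal _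

lemma dephase_kronecker (A : Matrix ι ι ℂ) (B : Matrix κ κ ℂ) :
    dephase (A ⊗ₖ B) = dephase A ⊗ₖ dephase B := by
  rw [dephase, dephase, dephase, diagonal_kronecker_diagonal]
  rfl

lemma incoherent_diagonal (d : ι → ℂ) : Incoherent (diagonal d) :=
  fun _ _ hij => diagonal_apply_ne d hij

lemma Incoherent.dephase_eq {A : Matrix ι ι ℂ} (hA : Incoherent A) : dephase A = A := by
  ext i j
  rcases eq_or_ne i j with rfl | hij
  · simp [dephase]
  · simp [dephase, hij, hA i j hij]

lemma Incoherent.Crel_eq_zero [Fintype ι] {A : Matrix ι ι ℂ} (hA : Incoherent A) :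
    Crel A = 0 := by
  rw [Crel, hA.dephase_eq, sub_self]

lemma Matrix.IsHermitian.Crel_kronecker [Fintype ι] [Fintype κ] {A : Matrix ι ι ℂ}
    {B : Matrix κ κ ℂ} (hA : A.IsHermitian) (hB : B.IsHermitian) :
    Crel (A ⊗ₖ B) = B.trace.re * Crel A + A.trace.re * Crel B := by
  rw [Crel, Crel, Crel, dephase_kronecker, hA.dephase.vnEntropy_kronecker hB.dephase,
    hA.vnEntropy_kronecker hB, trace_dephase, trace_dephase]
  ring

end Coherence

end

open Kronecker in
theorem Crel_tensor_classical_ancilla_general {a m : ℕ} (ρ : Matrix (Fin a) (Fin a) ℂ)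
    (hρ : IsDensityMatrix ρ) (c : Fin m → ℝ) (hc1 : ∑ i, c i = 1) :
    Crel (ρ ⊗ₖ Matrix.diagonal (fun i => (c i : ℂ))) = Crel ρ := by
  have hσ : (diagonal fun i => (c i : ℂ)).IsHermitian := isHermitian_diagonal_ofReal c
  rw [hρ.1.1.Crel_kronecker hσ, (incoherent_diagonal _).Crel_eq_zero, trace_diagonal,
    ← Complex.ofReal_sum, Complex.ofReal_re, hc1]
  ring

open Kronecker in
/-- Tensoring with a classical (incoherent, diagonal) ancilla does not change the relative
entropy of coherence: `C_r(ρ_A ⊗ σ_B) = C_r(ρ_A)`. -/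
theorem Crel_tensor_classical_ancilla {a m : ℕ} (ρ : Matrix (Fin a) (Fin a) ℂ)
    (hρ : IsDensityMatrix ρ) (c : Fin m → ℝ) (hc0 : ∀ i, 0 ≤ c i) (hc1 : ∑ i, c i = 1) :
    Crel (ρ ⊗ₖ Matrix.diagonal (fun i => (c i : ℂ))) = Crel ρ :=
  Crel_tensor_classical_ancilla_general ρ hρ c hc1
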